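/- Let (A, m) be a complete local Noetherian ring and I ⊆ A an ideal. Then the following are equivalent: (i) D^I(A) = lim_α D_m(A/I^α) is indecomposable as a ring (has no nontrivial idempotents); (ii) the punctured variety V(I) \ {m} is connected. -/

import Mathlib

set_option maxHeartbeats 1000000
set_option synthInstance.maxHeartbeats 1000000

open CategoryTheory AlgebraicGeometry TopologicalSpace

/-- The open complement of `V(J)` in `Spec B`. -/
def complementOpen (B : Type) [CommRing B] (J : Ideal B) :
    TopologicalSpace.Opens (PrimeSpectrum.Top B) :=
  ⟨(PrimeSpectrum.zeroLocus (J : Set B))ᶜ, (PrimeSpectrum.isClosed_zeroLocus _).isOpen_compl⟩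

/-- The ring `D_J(B)` of regular functions on `Spec B ∖ V(J)`: the ring of sections
of the structure sheaf of `Spec B` over the open complement of `V(J)`. -/
noncomputable abbrev sectionsRing (B : Type) [CommRing B] (J : Ideal B) : Type :=
  ↥((AlgebraicGeometry.Spec.structureSheaf B).1.obj (Opposite.op (complementOpen B J)))

theorem maxImage_sub {A : Type} [CommRing A] [IsLocalRing A] (I : Ideal A) {a b : ℕ}
    (h : a ≤ b) :
    (complementOpen (A ⧸ I ^ a)
        ((IsLocalRing.maximalIdeal A).map (Ideal.Quotient.mk (I ^ a)))).1 ⊆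
      PrimeSpectrum.comap
          (Ideal.Quotient.factor (Ideal.pow_le_pow_right h)) ⁻¹'
        (complementOpen (A ⧸ I ^ b)
          ((IsLocalRing.maximalIdeal A).map (Ideal.Quotient.mk (I ^ b)))).1 := by
  intro q hq hmem
  apply hq
  change (_ : Set _) ⊆ _ at hmem
  change (_ : Set _) ⊆ _
  intro x hx
  rw [SetLike.mem_coe] at hx
  obtain ⟨y, hy, rfl⟩ := (Ideal.mem_map_iff_of_surjective _ Ideal.Quotient.mk_surjective).mp hx
  have hb : (Ideal.Quotient.mk (I ^ b)) y ∈
      Ideal.map (Ideal.Quotient.mk (I ^ b)) (IsLocalRing.maximalIdeal A) :=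
    Ideal.mem_map_of_mem _ hy
  have hmm := hmem hb
  simpa [PrimeSpectrum.comap, Ideal.Quotient.factor] using hmm

/-- The transition maps `D_𝔪(A/I^b) → D_𝔪(A/I^a)` between the rings of regular functions on
the punctured spectra `Spec (A/I^α) ∖ {𝔪}`, induced by the canonical surjections. -/
noncomputable def formalSectionsTransition {A : Type} [CommRing A] [IsLocalRing A] (I : Ideal A)
    {a b : ℕ} (h : a ≤ b) :
    sectionsRing (A ⧸ I ^ b) ((IsLocalRing.maximalIdeal A).map (Ideal.Quotient.mk (I ^ b))) →+*
    sectionsRing (A ⧸ I ^ a) ((IsLocalRing.maximalIdeal A).map (Ideal.Quotient.mk (I ^ a))) :=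
  AlgebraicGeometry.StructureSheaf.comap
    (Ideal.Quotient.factor (S := I ^ b) (T := I ^ a) (Ideal.pow_le_pow_right h)) _ _ (maxImage_sub I h)

/-- The ring `D^I(A) = lim_α D_𝔪(A/I^α)` of formal regular functions, as the subring of
compatible families in the product of the `D_𝔪(A/I^α)`. -/
noncomputable def formalSectionsRing (A : Type) [CommRing A] [IsLocalRing A] (I : Ideal A) :
    Subring (∀ α : ℕ, sectionsRing (A ⧸ I ^ α)
      ((IsLocalRing.maximalIdeal A).map (Ideal.Quotient.mk (I ^ α)))) where
  carrier := {x | ∀ (a b : ℕ) (h : a ≤ b), formalSectionsTransition I h (x b) = x a}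
  one_mem' := fun a b h => by simp
  mul_mem' := fun hx hy a b h => by simp [hx a b h, hy a b h]
  zero_mem' := fun a b h => by simp
  add_mem' := fun hx hy a b h => by simp [hx a b h, hy a b h]
  neg_mem' := fun hx a b h => by simp [hx a b h]



set_option linter.unusedSectionVars false

namespace Aux


variable {B : Type} [CommRing B] {U : Opens (PrimeSpectrum.Top B)}

noncomputable abbrev Sec (U : Opens (PrimeSpectrum.Top B)) : Type :=
  ↥((AlgebraicGeometry.Spec.structureSheaf B).1.obj (Opposite.op U))

lemma val_mul (s t : Sec U) (x : U) : (s * t).1 x = s.1 x * t.1 x := rfl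
lemma val_sub (s t : Sec U) (x : U) : (s - t).1 x = s.1 x - t.1 x := rfl
lemma val_one (x : U) : (1 : Sec U).1 x = 1 := rfl
lemma val_zero (x : U) : (0 : Sec U).1 x = 0 := rfl

lemma isOpen_zeroSet (s : Sec U) :
    IsOpen {p : PrimeSpectrum B | ∃ hp : p ∈ U, s.1 ⟨p, hp⟩ = 0} := by
  rw [isOpen_iff_forall_mem_open]
  rintro p ⟨hp, hval⟩
  obtain ⟨V, m, i, r, f, hfrac⟩ := s.2 ⟨p, hp⟩
  have h1 := (hfrac ⟨p, m⟩).2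
  dsimp only at h1
  rw [show s.1 (i ⟨p, m⟩) = s.1 ⟨p, hp⟩ from rfl, hval,
    ← LocalizedModule.zero_mk (1 : p.asIdeal.primeCompl), LocalizedModule.mk_eq] at h1
  obtain ⟨⟨c, hc⟩, hcr⟩ := h1
  simp only [smul_zero, one_smul] at hcr
  refine ⟨V.1 ∩ (PrimeSpectrum.basicOpen c).1,
    ?_, V.2.inter (PrimeSpectrum.basicOpen c).2, ⟨m, hc⟩⟩
  rintro q ⟨hqV, hqc⟩
  have hq : q ∈ U := leOfHom i hqV
  refine ⟨hq, ?_⟩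
  obtain ⟨h2f, hq2⟩ := hfrac ⟨q, hqV⟩
  refine hq2.trans ?_
  rw [← LocalizedModule.zero_mk (1 : q.asIdeal.primeCompl), LocalizedModule.mk_eq]
  exact ⟨⟨c, hqc⟩, by rw [one_smul, smul_zero, smul_zero]; exact hcr.symm⟩

lemma isOpen_oneSet (s : Sec U) :
    IsOpen {p : PrimeSpectrum B | ∃ hp : p ∈ U, s.1 ⟨p, hp⟩ = 1} := by
  have h := isOpen_zeroSet (s - 1)
  convert h using 1
  ext p
  constructor
  · rintro ⟨hp, h1⟩; exact ⟨hp, by rw [val_sub, val_one, h1, sub_self]⟩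
  · rintro ⟨hp, h1⟩
    rw [val_sub, val_one, sub_eq_zero] at h1
    exact ⟨hp, h1⟩

lemma val_idem (s : Sec U) (hs : s * s = s) (x : U) : s.1 x = 0 ∨ s.1 x = 1 := by
  have h : s.1 x * s.1 x = s.1 x := by rw [← val_mul, hs]
  rcases IsLocalRing.isUnit_or_isUnit_one_sub_self (s.1 x) with hu | hu
  · right
    have h0 : s.1 x * (1 - s.1 x) = 0 := by rw [mul_one_sub, h, sub_self]
    have := (IsUnit.mul_right_eq_zero hu).mp h0
    rwa [sub_eq_zero, eq_comm] at this
  · left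
    have h0 : (1 - s.1 x) * s.1 x = 0 := by rw [one_sub_mul, h, sub_self]
    exact (IsUnit.mul_right_eq_zero hu).mp h0

lemma eq_zero_or_one_of_isPreconnected
    (hU : IsPreconnected (U : Set (PrimeSpectrum.Top B)))
    {s : Sec U} (hs : s * s = s) : s = 0 ∨ s = 1 := by
  set O0 := {p : PrimeSpectrum B | ∃ hp : p ∈ U, s.1 ⟨p, hp⟩ = 0} with hO0
  set O1 := {p : PrimeSpectrum B | ∃ hp : p ∈ U, s.1 ⟨p, hp⟩ = 1} with hO1
  by_cases h0 : s = 0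
  · exact Or.inl h0
  right
  have hx1 : ((U : Set (PrimeSpectrum.Top B)) ∩ O1).Nonempty := by
    by_contra hno
    apply h0
    apply Subtype.ext; funext x
    rcases val_idem s hs x with h | h
    · exact h
    · exact (hno ⟨x.1, x.2, x.2, h⟩).elim
  by_contra h1
  have hx0 : ((U : Set (PrimeSpectrum.Top B)) ∩ O0).Nonempty := by
    by_contra hno
    apply h1
    apply Subtype.ext; funext x
    rcases val_idem s hs x with h | h
    · exact (hno ⟨x.1, x.2, x.2, h⟩).elim
    · exact h
  have hsub : (U : Set (PrimeSpectrum.Top B)) ⊆ O0 ∪ O1 := by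
    intro p hp
    rcases val_idem s hs ⟨p, hp⟩ with h | h
    · exact Or.inl ⟨hp, h⟩
    · exact Or.inr ⟨hp, h⟩
  obtain ⟨q, hqU, ⟨hq0, hv0⟩, ⟨hq1, hv1⟩⟩ :=
    hU O0 O1 (isOpen_zeroSet s) (isOpen_oneSet s) hsub hx0 hx1
  have : (0 : StructureSheaf.Localizations B
      ((⟨q, hq0⟩ : U) : PrimeSpectrum.Top B)) = 1 := by
    rw [← hv0]; exact hv1
  exact zero_ne_one this



variable {A : Type} [CommRing A] [IsLocalRing A] (I : Ideal A)

noncomputable abbrev Uop (α : ℕ) : Opens (PrimeSpectrum.Top (A ⧸ I ^ α)) :=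
  complementOpen (A ⧸ I ^ α) ((IsLocalRing.maximalIdeal A).map (Ideal.Quotient.mk (I ^ α)))

noncomputable def phi (α : ℕ) (p : PrimeSpectrum (A ⧸ I ^ α)) : PrimeSpectrum A :=
  PrimeSpectrum.comap (Ideal.Quotient.mk (I ^ α)) p

/-- the punctured variety -/
def punct : Set (PrimeSpectrum A) :=
  PrimeSpectrum.zeroLocus (I : Set A) \
    {p : PrimeSpectrum A | p.asIdeal = IsLocalRing.maximalIdeal A}

lemma phi_mem_zeroLocus (α : ℕ) (p : PrimeSpectrum (A ⧸ I ^ α)) :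
    phi I α p ∈ PrimeSpectrum.zeroLocus (I : Set A) := by
  rw [PrimeSpectrum.mem_zeroLocus]
  have hpow : I ^ α ≤ (phi I α p).asIdeal := by
    intro x hx
    show Ideal.Quotient.mk (I ^ α) x ∈ p.asIdeal
    rw [Ideal.Quotient.eq_zero_iff_mem.mpr hx]
    exact zero_mem _
  exact SetLike.coe_subset_coe.mpr
    (@Ideal.IsPrime.le_of_pow_le _ _ I _ (phi I α p).2 α hpow)

lemma mem_Uop_iff (α : ℕ) (p : PrimeSpectrum (A ⧸ I ^ α)) :
    p ∈ Uop I α ↔ (phi I α p).asIdeal ≠ IsLocalRing.maximalIdeal A := by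
  have hmem : p ∈ Uop I α ↔
      ¬ ((IsLocalRing.maximalIdeal A).map (Ideal.Quotient.mk (I ^ α)) ≤ p.asIdeal) := by
    constructor
    · intro hp hle
      exact hp (SetLike.coe_subset_coe.mpr hle)
    · intro h hp
      exact h (SetLike.coe_subset_coe.mp hp)
  rw [hmem, Ideal.map_le_iff_le_comap]
  constructor
  · intro h heq
    exact h (le_of_eq heq.symm)
  · intro hne hle
    exact hne (((IsLocalRing.maximalIdeal.isMaximal A).eq_of_le (phi I α p).2.ne_top hle).symm)

lemma Uop_eq (α : ℕ) :
    ((Uop I α : Opens (PrimeSpectrum.Top (A ⧸ I ^ α))) : Set (PrimeSpectrum.Top (A ⧸ I ^ α))) =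
      phi I α ⁻¹' punct I := by
  ext p
  constructor
  · intro hp
    exact ⟨phi_mem_zeroLocus I α p, (mem_Uop_iff I α p).mp hp⟩
  · intro hp
    exact (mem_Uop_iff I α p).mpr hp.2

lemma exists_phi_eq {α : ℕ} (hα : α ≠ 0) {q : PrimeSpectrum A}
    (hq : q ∈ PrimeSpectrum.zeroLocus (I : Set A)) : ∃ p, phi I α p = q := by
  have hrange : q ∈ Set.range (phi I α) := by
    show q ∈ Set.range (PrimeSpectrum.comap (Ideal.Quotient.mk (I ^ α)))
    rw [range_comap_of_surjective _ _ Ideal.Quotient.mk_surjective,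
      Ideal.mk_ker]
    rwa [PrimeSpectrum.zeroLocus_pow _ hα]
  exact hrange


section Indicator

variable {A : Type} [CommRing A] [IsLocalRing A] (I : Ideal A)
variable {u v : Set (PrimeSpectrum A)}

open Classical in
noncomputable def indicatorSec (hu : IsOpen u) (hv : IsOpen v)
    (huv : punct I ⊆ u ∪ v) (hdisj : punct I ∩ (u ∩ v) = ∅) (α : ℕ) :
    Sec (Uop I α) :=
  ⟨fun x => if phi I α x.1 ∈ u then 1 else 0, by
    intro x
    have hx : punct I (phi I α x.1) :=
      ⟨phi_mem_zeroLocus I α x.1, (mem_Uop_iff I α x.1).mp x.2⟩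
    have hcont : Continuous (phi I α) :=
      PrimeSpectrum.continuous_comap (Ideal.Quotient.mk (I ^ α))
    by_cases hxu : phi I α x.1 ∈ u
    · refine ⟨⟨phi I α ⁻¹' u, hu.preimage hcont⟩ ⊓ Uop I α, ⟨hxu, x.2⟩,
        Opens.infLERight _ _, 1, 1, ?_⟩
      rintro ⟨y, hyu, hyU⟩
      refine ⟨?_, ?_⟩
      · intro h1
        exact (PrimeSpectrum.isPrime _).ne_top ((Ideal.eq_top_iff_one _).mpr h1)
      · dsimp only
        exact (if_pos (show phi I α y ∈ u from hyu)).trans OreLocalization.one_def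
    · have hxv : phi I α x.1 ∈ v := (huv hx).resolve_left hxu
      refine ⟨⟨phi I α ⁻¹' v, hv.preimage hcont⟩ ⊓ Uop I α, ⟨hxv, x.2⟩,
        Opens.infLERight _ _, 0, 1, ?_⟩
      rintro ⟨y, hyv, hyU⟩
      refine ⟨?_, ?_⟩
      · intro h1
        exact (PrimeSpectrum.isPrime _).ne_top ((Ideal.eq_top_iff_one _).mpr h1)
      · dsimp only
        have hyU' : punct I (phi I α y) :=
          ⟨phi_mem_zeroLocus I α y, (mem_Uop_iff I α y).mp hyU⟩
        have hyu : phi I α y ∉ u := by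
          intro hc
          have : phi I α y ∈ punct I ∩ (u ∩ v) := ⟨hyU', hc, hyv⟩
          rw [hdisj] at this
          exact this
        exact (if_neg hyu).trans (LocalizedModule.zero_mk _).symm⟩

open Classical in
lemma indicatorSec_val (hu : IsOpen u) (hv : IsOpen v)
    (huv : punct I ⊆ u ∪ v) (hdisj : punct I ∩ (u ∩ v) = ∅) (α : ℕ) (x : Uop I α) :
    (indicatorSec I hu hv huv hdisj α).1 x =
      (if phi I α x.1 ∈ u then 1 else 0 : StructureSheaf.Localizations (A ⧸ I ^ α) x.1) :=
  rfl

lemma indicatorSec_idem (hu : IsOpen u) (hv : IsOpen v)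
    (huv : punct I ⊆ u ∪ v) (hdisj : punct I ∩ (u ∩ v) = ∅) (α : ℕ) :
    indicatorSec I hu hv huv hdisj α * indicatorSec I hu hv huv hdisj α =
      indicatorSec I hu hv huv hdisj α := by
  apply Subtype.ext; funext x
  rw [val_mul, indicatorSec_val]
  by_cases h : phi I α x.1 ∈ u
  · rw [if_pos h, one_mul]
  · rw [if_neg h, zero_mul]

lemma indicatorSec_compat (hu : IsOpen u) (hv : IsOpen v)
    (huv : punct I ⊆ u ∪ v) (hdisj : punct I ∩ (u ∩ v) = ∅) {a b : ℕ} (h : a ≤ b) :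
    formalSectionsTransition I h (indicatorSec I hu hv huv hdisj b) =
      indicatorSec I hu hv huv hdisj a := by
  apply Subtype.ext; funext p
  have hcomp : phi I b (PrimeSpectrum.comap
      (Ideal.Quotient.factor (S := I ^ b) (T := I ^ a) (Ideal.pow_le_pow_right h)) p.1) = phi I a p.1 := by
    show PrimeSpectrum.comap (Ideal.Quotient.mk (I ^ b))
        (PrimeSpectrum.comap (Ideal.Quotient.factor (S := I ^ b) (T := I ^ a)
          (Ideal.pow_le_pow_right h)) p.1) = phi I a p.1
    exact PrimeSpectrum.ext (Ideal.ext fun x => Iff.rfl)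
  show (AlgebraicGeometry.StructureSheaf.comap
      (Ideal.Quotient.factor (S := I ^ b) (T := I ^ a) (Ideal.pow_le_pow_right h))
      _ _ (maxImage_sub I h) (indicatorSec I hu hv huv hdisj b)).1 p =
    (indicatorSec I hu hv huv hdisj a).1 p
  rw [AlgebraicGeometry.StructureSheaf.comap_apply, indicatorSec_val, indicatorSec_val]
  rw [hcomp]
  by_cases hmem : phi I a p.1 ∈ u
  · rw [if_pos hmem, if_pos hmem, map_one]
  · rw [if_neg hmem, if_neg hmem, map_zero]

end Indicator

section Main

variable {A : Type} [CommRing A] [IsLocalRing A] (I : Ideal A)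

lemma subsingleton_quot_zero : Subsingleton (A ⧸ I ^ 0) :=
  Ideal.Quotient.subsingleton_iff.mpr (by rw [pow_zero, Ideal.one_eq_top])

lemma sec_subsingleton {α : ℕ} (hempty : ¬ (punct I).Nonempty) (s t : Sec (Uop I α)) :
    s = t := by
  apply Subtype.ext; funext p
  exact absurd ⟨phi_mem_zeroLocus I α p.1, (mem_Uop_iff I α p.1).mp p.2⟩
    (fun h => hempty ⟨phi I α p.1, h⟩)

lemma zero_ne_one_sec {α : ℕ} (p : PrimeSpectrum (A ⧸ I ^ α)) (hp : p ∈ Uop I α) :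
    (0 : Sec (Uop I α)) ≠ 1 := by
  intro h
  have := congrFun (congrArg Subtype.val h) ⟨p, hp⟩
  exact zero_ne_one (this : (0 : StructureSheaf.Localizations (A ⧸ I ^ α) p) = 1)

end Main

end Aux

/-- **Theorem 8.2.** Let `(A, 𝔪)` be a complete local Noetherian ring and `I` an ideal.
The ring `D^I(A) = lim_α D_𝔪(A/I^α)` is indecomposable as a ring (nontrivial with no
nontrivial idempotents) if and only if `V(I) ∖ {𝔪}` is connected. -/
theorem formalSectionsRing_indecomposable_iff_connected {A : Type} [CommRing A]
    [IsNoetherianRing A] [IsLocalRing A]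
    (hcomplete : IsAdicComplete (IsLocalRing.maximalIdeal A) A) (I : Ideal A) :
    (Nontrivial ↥(formalSectionsRing A I) ∧
      ∀ e : ↥(formalSectionsRing A I), e * e = e → e = 0 ∨ e = 1) ↔
    IsConnected (PrimeSpectrum.zeroLocus (I : Set A) \
      {p : PrimeSpectrum A | p.asIdeal = IsLocalRing.maximalIdeal A}) := by

  classical
  constructor
  · rintro ⟨hnt, hidem⟩
    constructor
    · -- nonempty
      by_contra hempty
      obtain ⟨x, y, hxy⟩ := hnt
      exact hxy (Subtype.ext (funext fun α => Aux.sec_subsingleton I hempty _ _))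
    · intro u v hu hv huv hUu hUv
      by_contra hne
      rw [Set.not_nonempty_iff_eq_empty] at hne
      have huv' : Aux.punct I ⊆ u ∪ v := huv
      have hne' : Aux.punct I ∩ (u ∩ v) = ∅ := hne
      set e : ↥(formalSectionsRing A I) :=
        ⟨fun α => Aux.indicatorSec I hu hv huv' hne' α,
         fun a b h => Aux.indicatorSec_compat I hu hv huv' hne' h⟩ with he_def
      have he : e * e = e :=
        Subtype.ext (funext fun α => Aux.indicatorSec_idem I hu hv huv' hne' α)
      rcases hidem e he with h0 | h1
      · obtain ⟨q, hqU, hqu⟩ := hUu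
        obtain ⟨p, hp⟩ := Aux.exists_phi_eq I one_ne_zero hqU.1
        have hpU : p ∈ Aux.Uop I 1 :=
          (Aux.mem_Uop_iff I 1 p).mpr (by rw [show Aux.phi I 1 p = q from hp]; exact hqU.2)
        have hval : (e.1 1).1 ⟨p, hpU⟩ = 1 := by
          rw [show e.1 1 = Aux.indicatorSec I hu hv huv' hne' 1 from rfl,
            Aux.indicatorSec_val, if_pos (show Aux.phi I 1 p ∈ u from hp ▸ hqu)]
        rw [h0] at hval
        have hz : (0 : StructureSheaf.Localizations (A ⧸ I ^ 1) p) = 1 := hval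
        exact zero_ne_one hz
      · obtain ⟨q, hqU, hqv⟩ := hUv
        obtain ⟨p, hp⟩ := Aux.exists_phi_eq I one_ne_zero hqU.1
        have hpU : p ∈ Aux.Uop I 1 :=
          (Aux.mem_Uop_iff I 1 p).mpr (by rw [show Aux.phi I 1 p = q from hp]; exact hqU.2)
        by_cases hqu : q ∈ u
        · have hq : q ∈ (PrimeSpectrum.zeroLocus (I : Set A) \
              {p : PrimeSpectrum A | p.asIdeal = IsLocalRing.maximalIdeal A}) ∩ (u ∩ v) :=
            ⟨hqU, hqu, hqv⟩
          rw [hne] at hq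
          exact hq
        · have hval : (e.1 1).1 ⟨p, hpU⟩ = 0 := by
            rw [show e.1 1 = Aux.indicatorSec I hu hv huv' hne' 1 from rfl,
              Aux.indicatorSec_val, if_neg (show ¬ Aux.phi I 1 p ∈ u from hp ▸ hqu)]
          rw [h1] at hval
          have hz : (1 : StructureSheaf.Localizations (A ⧸ I ^ 1) p) = 0 := hval
          exact one_ne_zero hz
  · rintro ⟨hne, hpre⟩
    obtain ⟨q0, hq0⟩ := hne
    obtain ⟨p0, hp0⟩ := Aux.exists_phi_eq I one_ne_zero hq0.1
    have hp0U : p0 ∈ Aux.Uop I 1 :=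
      (Aux.mem_Uop_iff I 1 p0).mpr (by rw [show Aux.phi I 1 p0 = q0 from hp0]; exact hq0.2)
    have hΓ1 : (0 : Aux.Sec (Aux.Uop I 1)) ≠ 1 := Aux.zero_ne_one_sec I p0 hp0U
    have hsub0 : ∀ s t : Aux.Sec (Aux.Uop I 0), s = t := by
      intro s t
      haveI := Aux.subsingleton_quot_zero I
      apply Subtype.ext; funext p
      exact ((inferInstance : IsEmpty (PrimeSpectrum (A ⧸ I ^ 0))).false p.1).elim
    constructor
    · refine ⟨0, 1, fun h => hΓ1 ?_⟩
      exact congrFun (congrArg Subtype.val h) 1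
    · intro e he
      have hecomp : ∀ α, (e.1 α) * (e.1 α) = e.1 α := fun α =>
        congrFun (congrArg Subtype.val he) α
      have hmem : ∀ (a b : ℕ) (h : a ≤ b), formalSectionsTransition I h (e.1 b) = e.1 a := e.2
      have htri : ∀ α, α ≠ 0 → (e.1 α = 0 ∨ e.1 α = 1) := by
        intro α hα
        refine Aux.eq_zero_or_one_of_isPreconnected ?_ (hecomp α)
        rw [Aux.Uop_eq I α]
        refine IsPreconnected.preimage_of_isClosedMap (f := Aux.phi I α) hpre ?_ ?_ ?_
        · exact PrimeSpectrum.comap_injective_of_surjective _ Ideal.Quotient.mk_surjective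
        · exact (PrimeSpectrum.isClosedEmbedding_comap_of_surjective _ _
            Ideal.Quotient.mk_surjective).isClosedMap
        · intro q hq
          exact Aux.exists_phi_eq I hα hq.1
      rcases htri 1 one_ne_zero with h0 | h1
      · left
        apply Subtype.ext; funext α
        rcases Nat.eq_zero_or_pos α with rfl | hpos
        · exact hsub0 _ _
        · rcases htri α (Nat.pos_iff_ne_zero.mp hpos) with h | h
          · exact h
          · exfalso
            have hc := hmem 1 α hpos
            rw [h, map_one] at hc
            rw [← hc] at h0
            exact hΓ1 h0.symm
      · right
        apply Subtype.ext; funext α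
        rcases Nat.eq_zero_or_pos α with rfl | hpos
        · exact hsub0 _ _
        · rcases htri α (Nat.pos_iff_ne_zero.mp hpos) with h | h
          · exfalso
            have hc := hmem 1 α hpos
            rw [h, map_zero] at hc
            rw [← hc] at h1
            exact hΓ1 h1
          · exact h
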